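/- The quaternion algebra (-6, 6) over ℚ (equivalently (-D, m) with D = 6, m = 6) ramifies at a set of primes different from {2, 3}; consequently, by the criterion in the paper, the surface A_f of level 243 is not the Jacobian of a genus 2 curve defined over ℚ. -/
import Mathlib


/-- The quaternion algebra (a,b)/ℚ is ramified at the prime p iff its reduced norm
form x² - a·y² - b·z² + ab·w² is anisotropic over ℚ_p. -/
def QuatRamifiedAt (a b : ℚ) (p : ℕ) [Fact p.Prime] : Prop :=
  ∀ x y z w : ℚ_[p],
    x ^ 2 - (a : ℚ_[p]) * y ^ 2 - (b : ℚ_[p]) * z ^ 2 + (a : ℚ_[p]) * (b : ℚ_[p]) * w ^ 2 = 0 →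
      x = 0 ∧ y = 0 ∧ z = 0 ∧ w = 0

/-- the quaternion algebra (-6,6)/ℚ ramifies at a set of primes
different from {2, 3}: it is not the case that it is ramified exactly at 2 and 3. -/
theorem quat_neg6_6_not_ramified_exactly_at_two_three :
    ¬ (∀ (p : ℕ) [Fact p.Prime], QuatRamifiedAt (-6) 6 p ↔ (p = 2 ∨ p = 3)) := by
  intro h
  have h2 : QuatRamifiedAt (-6) 6 2 := (h 2).mpr (Or.inl rfl)
  have h1 := (h2 0 1 1 0 (by push_cast; ring)).2.1
  exact one_ne_zero h1
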